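/- For every R > 0 there exist constants δ > 0 and M > 0, depending only on R, with the following property. Let E ∈ 𝒰_R ⊆ ℝ³, let p ∈ ∂E with admissible centers p′, p′′, and let g be an affine isometry of ℝ³ with g(0) = p and g(e₃) − g(0) = (p′′ − p′)/(2R); set C := {x ∈ ℝ² : |x| < δ} × (−R, R). Then for every x̄ ∈ ℝ² with |x̄| < δ, every plane γ ⊆ ℝ³ containing the point g(x̄, 0) and parallel to the direction g(e₃) − g(0), and every q ∈ ∂E ∩ g(C) ∩ γ, there exist points c′, c′′ ∈ γ with |q − c′| = |q − c′′| = MR such that the open two-dimensional disk {y ∈ γ : |y − c′| < MR} is contained in E and the open disk {y ∈ γ : |y − c′′| < MR} is disjoint from E (i.e., the planar section E ∩ γ satisfies the exterior and interior sphere condition with radius MR within γ at q). -/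

import Mathlib

open Set Metric MeasureTheory Filter Topology ENNReal NNReal

noncomputable section

abbrev En (n : ℕ) := EuclideanSpace ℝ (Fin n)

def sphereCond (n : ℕ) (R : ℝ) (E : Set (En n)) : Prop :=
  ∀ p ∈ frontier E, ∃ p' p'' : En n, dist p p' = R ∧ dist p p'' = R ∧
    ball p' R ⊆ E ∧ ball p'' R ∩ E = ∅

def UR (n : ℕ) (R : ℝ) : Set (Set (En n)) :=
  {E | IsClosed E ∧ Bornology.IsBounded E ∧ sphereCond n R E}

/-- The point of `ℝ³` with horizontal coordinates `x` and vertical coordinate `z`. -/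
def emb3 (x : En 2) (z : ℝ) : En 3 :=
  (WithLp.equiv 2 (Fin 3 → ℝ)).symm (fun i => if h : (i : ℕ) < 2 then x ⟨i, h⟩ else z)

/-!
Let `ν` be the unit normal at `p`, so that the admissible centers of `p` are `p ∓ R ν`. A boundary
point `q = p + u` lies outside both balls at `p`, which forces `2 R |⟪u, ν⟫| ≤ ‖u‖²`; inside the
thin cylinder this gives `‖u‖ ≤ R / 8`. The inner ball at `q` cannot meet the outer ball at `p`,
so the unit normal `n` at `q` satisfies `R ‖n - ν‖² ≤ 4 ‖u‖`: it is almost vertical, and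
`⟪n, w⟫² ≤ 3 / 4` for every horizontal unit vector `w`. Hence each ball at `q` cuts the plane
through `q` with normal `w` in a disk of radius at least `R / 2` with `q` on its boundary, and the
disk of radius `R / 2` internally tangent to it at `q` is the one required.
-/

open scoped RealInnerProductSpace

section MetricSpace

variable {X : Type*} [PseudoMetricSpace X] {E : Set X} {q c : X} {r : ℝ}

lemma le_dist_of_mem_frontier_of_ball_subset (hq : q ∈ frontier E) (h : ball c r ⊆ E) :
    r ≤ dist q c := by
  by_contra! hlt
  exact hq.2 (interior_maximal h isOpen_ball (mem_ball.2 hlt))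

lemma le_dist_of_mem_frontier_of_ball_inter_eq_empty (hq : q ∈ frontier E)
    (h : ball c r ∩ E = ∅) : r ≤ dist q c :=
  le_dist_of_mem_frontier_of_ball_subset (frontier_compl E ▸ hq)
    (subset_compl_iff_disjoint_right.2 (disjoint_iff_inter_eq_empty.2 h))

end MetricSpace

section NormedSpace

variable {V : Type*} [NormedAddCommGroup V] [NormedSpace ℝ V]

lemma two_mul_le_dist_of_ball_subset_of_ball_inter_eq_empty {E : Set V} {a b : V} {r : ℝ}
    (hr : 0 < r) (ha : ball a r ⊆ E) (hb : ball b r ∩ E = ∅) : 2 * r ≤ dist a b := by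
  have hdisj : Disjoint (ball a r) (ball b r) :=
    (disjoint_iff_inter_eq_empty.2 hb).symm.mono_left ha
  linarith [(disjoint_ball_ball_iff hr hr).1 hdisj]

lemma exists_unit_of_admissible_centers [StrictConvexSpace ℝ V] {E : Set V}
    {p p' p'' : V} {R : ℝ} (hR : 0 < R) (hp' : dist p p' = R) (hp'' : dist p p'' = R)
    (h' : ball p' R ⊆ E) (h'' : ball p'' R ∩ E = ∅) :
    ∃ n : V, ‖n‖ = 1 ∧ p' = p - R • n ∧ p'' = p + R • n := by
  have hdist : dist p' p'' = 2 * R :=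
    le_antisymm (by linarith [dist_triangle p' p p'', dist_comm p p'])
      (two_mul_le_dist_of_ball_subset_of_ball_inter_eq_empty hR h' h'')
  have hmid : p = midpoint ℝ p' p'' :=
    eq_midpoint_of_dist_eq_half (by rw [dist_comm, hp', hdist]; ring) (by rw [hp'', hdist]; ring)
  refine ⟨R⁻¹ • (p'' - p), ?_, ?_, ?_⟩
  · rw [norm_smul, ← dist_eq_norm, dist_comm, hp'', norm_inv, Real.norm_of_nonneg hR.le,
      inv_mul_cancel₀ hR.ne']
  · rw [smul_smul, mul_inv_cancel₀ hR.ne', one_smul, hmid, midpoint_eq_smul_add, invOf_eq_inv]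
    module
  · rw [smul_smul, mul_inv_cancel₀ hR.ne', one_smul]
    abel

lemma exists_tangent_ball_subset_ball {q P : V} {ρ : ℝ} (hρ : 0 < ρ) (hρq : ρ ≤ dist q P) :
    ∃ t : ℝ, dist q (AffineMap.lineMap q P t) = ρ ∧
      ball (AffineMap.lineMap q P t) ρ ⊆ ball P (dist q P) := by
  have hd : 0 < dist q P := hρ.trans_le hρq
  refine ⟨ρ / dist q P, ?_, ball_subset_ball' ?_⟩
  · rw [dist_comm, dist_lineMap_left, Real.norm_of_nonneg (by positivity),
      div_mul_cancel₀ _ hd.ne']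
  · rw [dist_lineMap_right, Real.norm_of_nonneg (by rw [sub_nonneg, div_le_one hd]; exact hρq),
      sub_mul, div_mul_cancel₀ _ hd.ne']
    linarith

end NormedSpace

section InnerProductSpace

variable {V : Type*} [NormedAddCommGroup V] [InnerProductSpace ℝ V]

lemma two_mul_abs_inner_le_sq_norm_sub {p q n : V} {R : ℝ} (hR : 0 ≤ R) (hn : ‖n‖ = 1)
    (h₁ : R ≤ dist q (p - R • n)) (h₂ : R ≤ dist q (p + R • n)) :
    2 * R * |⟪q - p, n⟫| ≤ ‖q - p‖ ^ 2 := by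
  have e₁ : dist q (p - R • n) ^ 2 = ‖q - p‖ ^ 2 + 2 * R * ⟪q - p, n⟫ + R ^ 2 := by
    rw [dist_eq_norm, show q - (p - R • n) = (q - p) + R • n by abel, norm_add_sq_real,
      real_inner_smul_right, norm_smul, hn, Real.norm_of_nonneg hR]
    ring
  have e₂ : dist q (p + R • n) ^ 2 = ‖q - p‖ ^ 2 - 2 * R * ⟪q - p, n⟫ + R ^ 2 := by
    rw [dist_eq_norm, show q - (p + R • n) = (q - p) - R • n by abel, norm_sub_sq_real,
      real_inner_smul_right, norm_smul, hn, Real.norm_of_nonneg hR]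
    ring
  have s₁ := pow_le_pow_left₀ hR h₁ 2
  have s₂ := pow_le_pow_left₀ hR h₂ 2
  rcases abs_cases ⟪q - p, n⟫ with ⟨h, -⟩ | ⟨h, -⟩ <;> rw [h] <;> linarith

lemma mul_sq_norm_sub_le_of_two_mul_le_dist {p q a b : V} {R : ℝ} (hR : 0 < R) (ha : ‖a‖ = 1)
    (hb : ‖b‖ = 1) (h : 2 * R ≤ dist (q - R • a) (p + R • b)) :
    R * ‖a - b‖ ^ 2 ≤ 4 * ‖q - p‖ := by
  have htri : 2 * R ≤ ‖q - p‖ + R * ‖a + b‖ :=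
    calc 2 * R ≤ dist (q - R • a) (p + R • b) := h
      _ = ‖(q - p) - R • (a + b)‖ := by rw [dist_eq_norm, smul_add]; congr 1; abel
      _ ≤ ‖q - p‖ + ‖R • (a + b)‖ := norm_sub_le _ _
      _ = ‖q - p‖ + R * ‖a + b‖ := by rw [norm_smul, Real.norm_of_nonneg hR.le]
  have hpar := parallelogram_law_with_norm ℝ a b
  rw [ha, hb] at hpar
  have hab : 0 ≤ 2 - ‖a + b‖ := by linarith [norm_add_le a b]
  nlinarith [mul_nonneg (mul_nonneg hR.le hab) hab]

lemma dist_sq_eq_dist_sq_add_inner_sq {a w y o : V} (hw : ‖w‖ = 1) (hy : ⟪y - a, w⟫ = 0) :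
    dist y o ^ 2 = dist y (o - ⟪o - a, w⟫ • w) ^ 2 + ⟪o - a, w⟫ ^ 2 := by
  set s := ⟪o - a, w⟫
  have hperp : ⟪y - (o - s • w), w⟫ = 0 := by
    rw [show y - (o - s • w) = (y - a) - (o - a) + s • w by abel, inner_add_left,
      inner_sub_left, hy, real_inner_smul_left, real_inner_self_eq_norm_sq, hw]
    ring
  rw [dist_eq_norm, dist_eq_norm, show y - o = (y - (o - s • w)) - s • w by abel,
    norm_sub_sq_real, real_inner_smul_right, hperp, norm_smul, hw, Real.norm_eq_abs, mul_one,
    sq_abs]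
  ring

lemma exists_planar_disk_subset_ball {a w q o : V} {R ρ : ℝ} (hw : ‖w‖ = 1)
    (hq : ⟪q - a, w⟫ = 0) (hqo : dist q o = R) (hρ : 0 < ρ)
    (hρR : ⟪o - q, w⟫ ^ 2 + ρ ^ 2 ≤ R ^ 2) :
    ∃ c ∈ {y | ⟪y - a, w⟫ = 0}, dist q c = ρ ∧
      {y ∈ {y | ⟪y - a, w⟫ = 0} | dist y c < ρ} ⊆ ball o R := by
  set s := ⟪o - a, w⟫
  set P := o - s • w with hPdef
  have hs : ⟪o - q, w⟫ = s := by
    rw [show o - q = (o - a) - (q - a) by abel, inner_sub_left, hq, sub_zero]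
  have hP : ⟪P - a, w⟫ = 0 := by
    rw [hPdef, show o - s • w - a = (o - a) - s • w by abel, inner_sub_left,
      real_inner_smul_left, real_inner_self_eq_norm_sq, hw]
    ring
  have hRP : R ^ 2 = dist q P ^ 2 + s ^ 2 := hqo ▸ dist_sq_eq_dist_sq_add_inner_sq hw hq
  have hρP : ρ ≤ dist q P := by
    rw [hs] at hρR
    nlinarith [dist_nonneg (x := q) (y := P)]
  obtain ⟨t, hqc, hball⟩ := exists_tangent_ball_subset_ball hρ hρP
  refine ⟨AffineMap.lineMap q P t, ?_, hqc, ?_⟩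
  · change ⟪AffineMap.lineMap q P t - a, w⟫ = 0
    rw [AffineMap.lineMap_apply, vsub_eq_sub, vadd_eq_add,
      show t • (P - q) + q - a = t • ((P - a) - (q - a)) + (q - a) by module, inner_add_left,
      real_inner_smul_left, inner_sub_left, hP, hq]
    ring
  · rintro y ⟨hy, hyc⟩
    have hyP : dist y P < dist q P := hball hyc
    have hyo := dist_sq_eq_dist_sq_add_inner_sq (o := o) hw hy
    rw [mem_ball]
    nlinarith [dist_nonneg (x := y) (y := o), dist_nonneg (x := y) (y := P),
      dist_nonneg (x := q) (y := o)]

lemma sq_inner_le_sq_norm_sub {w ν : V} (hw : ‖w‖ = 1) (hwν : ⟪w, ν⟫ = 0) (n : V) :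
    ⟪n, w⟫ ^ 2 ≤ ‖n - ν‖ ^ 2 := by
  have h := abs_real_inner_le_norm (n - ν) w
  rw [inner_sub_left, real_inner_comm w ν, hwν, sub_zero, hw, mul_one] at h
  rw [← sq_abs]
  exact pow_le_pow_left₀ (abs_nonneg _) h 2

lemma IsometryEquiv.inner_sub_map_zero (g : V ≃ᵢ V) (x y : V) :
    ⟪g x - g 0, g y - g 0⟫ = ⟪x, y⟫ := by
  simpa only [g.toRealLinearIsometryEquiv_apply] using
    g.toRealLinearIsometryEquiv.inner_map_map x y

end InnerProductSpace

lemma IsometryEquiv.norm_sub_map_zero {V W : Type*} [SeminormedAddCommGroup V]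
    [SeminormedAddCommGroup W] (g : V ≃ᵢ W) (x : V) : ‖g x - g 0‖ = ‖x‖ := by
  rw [← dist_eq_norm, g.dist_eq, dist_zero_right]

lemma inner_emb3_emb3_zero_one (x : En 2) (z : ℝ) : ⟪emb3 x z, emb3 0 1⟫ = z := by
  simp [PiLp.inner_apply, Fin.sum_univ_three, emb3]

lemma norm_emb3_sq (x : En 2) (z : ℝ) : ‖emb3 x z‖ ^ 2 = ‖x‖ ^ 2 + z ^ 2 := by
  simp [EuclideanSpace.norm_sq_eq, Fin.sum_univ_three, Fin.sum_univ_two, emb3]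

lemma norm_map_emb3_sub_map_zero_le {R : ℝ} (hR : 0 < R) (g : En 3 ≃ᵢ En 3) {x : En 2}
    {z : ℝ} (hx : ‖x‖ < R / 10) (hz : |z| < R)
    (h : 2 * R * |⟪g (emb3 x z) - g 0, g (emb3 0 1) - g 0⟫| ≤ ‖g (emb3 x z) - g 0‖ ^ 2) :
    ‖g (emb3 x z) - g 0‖ ≤ R / 8 := by
  rw [g.inner_sub_map_zero, inner_emb3_emb3_zero_one, g.norm_sub_map_zero, norm_emb3_sq] at h
  rw [g.norm_sub_map_zero, ← sq_le_sq₀ (norm_nonneg _) (by positivity), norm_emb3_sq]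
  have hz₁ : R * |z| ≤ ‖x‖ ^ 2 := by nlinarith [sq_abs z, abs_nonneg z]
  have hz₂ : |z| ≤ R / 100 := by nlinarith [norm_nonneg x]
  nlinarith [sq_abs z, abs_nonneg z, norm_nonneg x]

theorem planar_sections_sphere_condition (R : ℝ) (hR : 0 < R) :
    ∃ δ > (0:ℝ), ∃ M > (0:ℝ), ∀ E ∈ UR 3 R, ∀ p p' p'' : En 3,
      p ∈ frontier E →
      dist p p' = R → dist p p'' = R → ball p' R ⊆ E → ball p'' R ∩ E = ∅ →
      ∀ g : En 3 ≃ᵢ En 3, g 0 = p → g (emb3 0 1) - g 0 = (2 * R)⁻¹ • (p'' - p') →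
      ∀ xb : En 2, ‖xb‖ < δ →
      ∀ w : En 3, ‖w‖ = 1 → (inner ℝ w (g (emb3 0 1) - g 0) : ℝ) = 0 →
      ∀ q, q ∈ frontier E ∩
          (g '' {y | ∃ x : En 2, ‖x‖ < δ ∧ ∃ z ∈ Ioo (-R) R, y = emb3 x z}) ∩
          {y : En 3 | (inner ℝ (y - g (emb3 xb 0)) w : ℝ) = 0} →
      ∃ c' ∈ {y : En 3 | (inner ℝ (y - g (emb3 xb 0)) w : ℝ) = 0},
      ∃ c'' ∈ {y : En 3 | (inner ℝ (y - g (emb3 xb 0)) w : ℝ) = 0},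
        dist q c' = M * R ∧ dist q c'' = M * R ∧
        {y ∈ {y : En 3 | (inner ℝ (y - g (emb3 xb 0)) w : ℝ) = 0} | dist y c' < M * R} ⊆ E ∧
        {y ∈ {y : En 3 | (inner ℝ (y - g (emb3 xb 0)) w : ℝ) = 0} | dist y c'' < M * R} ∩ E
          = ∅ := by
  refine ⟨R / 10, by positivity, 1 / 2, by norm_num, ?_⟩
  rintro E hE p p' p'' - hpp' hpp'' hp' hp'' g rfl hgν xb - w hw hwν q
    ⟨⟨hq, -, ⟨x, hx, z, hz, rfl⟩, rfl⟩, hqH⟩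
  obtain ⟨ν, hν, rfl, rfl⟩ := exists_unit_of_admissible_centers hR hpp' hpp'' hp' hp''
  have hgν' : g (emb3 0 1) - g 0 = ν := by
    rw [hgν, show g 0 + R • ν - (g 0 - R • ν) = (2 * R) • ν by module, smul_smul,
      inv_mul_cancel₀ (by positivity), one_smul]
  obtain ⟨q', q'', hqq', hqq'', hq', hq''⟩ := hE.2.2 _ hq
  obtain ⟨n, hn, rfl, rfl⟩ := exists_unit_of_admissible_centers hR hqq' hqq'' hq' hq''
  have hflat := two_mul_abs_inner_le_sq_norm_sub hR.le hν
    (le_dist_of_mem_frontier_of_ball_subset hq hp')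
    (le_dist_of_mem_frontier_of_ball_inter_eq_empty hq hp'')
  rw [← hgν'] at hflat
  have hclose := mul_sq_norm_sub_le_of_two_mul_le_dist hR hn hν
    (two_mul_le_dist_of_ball_subset_of_ball_inter_eq_empty hR hq' hp'')
  have htilt : R ^ 2 * ⟪n, w⟫ ^ 2 ≤ R ^ 2 - (1 / 2 * R) ^ 2 := by
    have := sq_inner_le_sq_norm_sub hw (by rwa [hgν'] at hwν) n
    have := norm_map_emb3_sub_map_zero_le hR g hx (abs_lt.2 hz) hflat
    nlinarith
  obtain ⟨c', hc'H, hqc', hc'⟩ :=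
    exists_planar_disk_subset_ball (ρ := 1 / 2 * R) hw hqH hqq' (by positivity) (by
      rw [show _ - R • n - _ = (-R) • n by module, real_inner_smul_left]
      linear_combination htilt)
  obtain ⟨c'', hc''H, hqc'', hc''⟩ :=
    exists_planar_disk_subset_ball (ρ := 1 / 2 * R) hw hqH hqq'' (by positivity) (by
      rw [show _ + R • n - _ = R • n by module, real_inner_smul_left]
      linear_combination htilt)
  exact ⟨c', hc'H, c'', hc''H, hqc', hqc'', hc'.trans hq',
    subset_empty_iff.1 (hq'' ▸ inter_subset_inter_left E hc'')⟩
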